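/- arXiv:1710.09859 — 5 statements merged into one kernel-verified Lean document; each statement's English description precedes it below -/
import Mathlib

section
/- For any disjoint partition of the data points into k clusters, the sum of the between-sample energy statistic and the within energy dispersion satisfies S + W = (s/2)·g(X,X), where g(X,X) = (1/s²) Σ_{i=1}^n Σ_{j=1}^n w_i w_j ρ(x_i, x_j). In particular, S + W does not depend on the choice of partition. -/
open Finset

/-- Weighted within/between cluster energy function
`g(A,B) = (1/(s_A s_B)) Σ_{i∈A} Σ_{j∈B} w_i w_j ρ(x_i, x_j)`. -/
noncomputable def energyG {X : Type*} {n : ℕ} (x : Fin n → X) (w : Fin n → ℝ)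
    (ρ : X → X → ℝ) (A B : Finset (Fin n)) : ℝ :=
  (1 / ((∑ i ∈ A, w i) * (∑ j ∈ B, w j))) * ∑ i ∈ A, ∑ j ∈ B, w i * w j * ρ (x i) (x j)

/-- The within energy dispersion `W = Σ_a (s_a/2) g(C_a, C_a)`. -/
noncomputable def energyW {X : Type*} {n k : ℕ} (x : Fin n → X) (w : Fin n → ℝ)
    (ρ : X → X → ℝ) (C : Fin k → Finset (Fin n)) : ℝ :=
  ∑ a, ((∑ i ∈ C a, w i) / 2) * energyG x w ρ (C a) (C a)

/-- The between-sample energy statistic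
`S = Σ_{a<b} (s_a s_b/(2s)) [2 g(C_a,C_b) − g(C_a,C_a) − g(C_b,C_b)]`. -/
noncomputable def energyS {X : Type*} {n k : ℕ} (x : Fin n → X) (w : Fin n → ℝ)
    (ρ : X → X → ℝ) (C : Fin k → Finset (Fin n)) : ℝ :=
  ∑ a : Fin k, ∑ b ∈ Finset.Ioi a,
    ((∑ i ∈ C a, w i) * (∑ j ∈ C b, w j) / (2 * ∑ c : Fin k, ∑ i ∈ C c, w i)) *
      (2 * energyG x w ρ (C a) (C b) - energyG x w ρ (C a) (C a) -
        energyG x w ρ (C b) (C b))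

/-- `C` is a partition of `{1,…,n}` into `k` nonempty disjoint clusters. -/
def EnergyPartition {n k : ℕ} (C : Fin k → Finset (Fin n)) : Prop :=
  (∀ a b, a ≠ b → Disjoint (C a) (C b)) ∧ (∀ i, ∃ a, i ∈ C a) ∧ ∀ a, (C a).Nonempty

/-!
Write `s_a` for the weight of cluster `a` and `E_ab = s_a s_b g(C_a, C_b)`. The summand of `S`
vanishes on the diagonal and is symmetric in `(a, b)`, so `S` is half its sum over all ordered
pairs. There the terms `g(C_a, C_a)` add up to `-W`, leaving `(1/(2s)) Σ_{a,b} E_ab`, and since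
the clusters partition the data this double sum is `Σ_{i,j} w_i w_j ρ(x_i, x_j)`.
-/

open Function

theorem Finset.sum_sum_eq_two_nsmul_sum_sum_Ioi {ι M : Type*} [LinearOrder ι] [Fintype ι]
    [LocallyFiniteOrderTop ι] [AddCommMonoid M] {f : ι → ι → M}
    (hf : ∀ a b, f a b = f b a) (hdiag : ∀ a, f a a = 0) :
    ∑ a, ∑ b, f a b = 2 • ∑ a, ∑ b ∈ Ioi a, f a b := by
  have hsplit : ∀ a b, f a b = (if a < b then f a b else 0) + (if b < a then f a b else 0) := by
    intro a b
    rcases lt_trichotomy a b with h | rfl | h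
    · simp [h, h.not_gt]
    · simp [hdiag]
    · simp [h, h.not_gt]
  have hIoi : ∀ a, ∑ b ∈ Ioi a, f a b = ∑ b, if a < b then f a b else 0 := fun a => by
    rw [← sum_filter, filter_lt_eq_Ioi]
  calc ∑ a, ∑ b, f a b
      = ∑ a, ∑ b, (if a < b then f a b else 0) + ∑ a, ∑ b, (if b < a then f a b else 0) := by
        simp only [← sum_add_distrib, ← hsplit]
    _ = ∑ a, ∑ b, (if a < b then f a b else 0) + ∑ a, ∑ b, (if a < b then f a b else 0) := by
        rw [sum_comm (f := fun a b => if b < a then f a b else 0)]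
        simp only [hf]
    _ = 2 • ∑ a, ∑ b ∈ Ioi a, f a b := by simp only [hIoi, two_nsmul]

theorem sum_eq_sum_sum_of_partition {ι κ M : Type*} [Fintype ι] [Fintype κ] [AddCommMonoid M]
    {C : κ → Finset ι} (hdisj : Pairwise (Disjoint on C)) (hcover : ∀ i, ∃ a, i ∈ C a)
    (f : ι → M) : ∑ i, f i = ∑ a, ∑ i ∈ C a, f i := by
  classical
  have huniv : (univ : Finset ι) = univ.biUnion C := by
    ext i
    simpa using hcover i
  rw [huniv, sum_biUnion fun a _ b _ hab => hdisj hab]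

theorem between_add_within_eq {ι K : Type*} [LinearOrder ι] [Fintype ι] [LocallyFiniteOrderTop ι]
    [Field K] [LinearOrder K] [IsStrictOrderedRing K] (s : ι → K) (E : ι → ι → K)
    (hs : ∀ a, 0 < s a) (hE : ∀ a b, E a b = E b a) :
    ∑ a, ∑ b ∈ Ioi a, (s a * s b / (2 * ∑ c, s c)) *
        (2 * (1 / (s a * s b) * E a b) - 1 / (s a * s a) * E a a - 1 / (s b * s b) * E b b) +
      ∑ a, (s a / 2) * (1 / (s a * s a) * E a a) =
      (∑ a, s a) / 2 * (1 / (∑ a, s a) ^ 2 * ∑ a, ∑ b, E a b) := by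
  rcases isEmpty_or_nonempty ι with _ | _
  · simp
  set S := ∑ a, s a
  have hS : S ≠ 0 := (sum_pos (fun a _ => hs a) univ_nonempty).ne'
  have hs0 : ∀ a, s a ≠ 0 := fun a => (hs a).ne'
  set D := fun a => E a a / s a
  set f := fun a b => (s a * s b / (2 * S)) *
    (2 * (1 / (s a * s b) * E a b) - 1 / (s a * s a) * E a a - 1 / (s b * s b) * E b b)
  have hf : ∀ a b, f a b = E a b / S - (s b * D a + s a * D b) / (2 * S) := by
    intro a b
    simp only [f, D]
    field_simp [hs0 a, hs0 b]
    ring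
  have hpairs : 2 * ∑ a, ∑ b ∈ Ioi a, f a b = ∑ a, ∑ b, f a b := by
    rw [sum_sum_eq_two_nsmul_sum_sum_Ioi (fun a b => by simp only [f, hE a b]; ring)
      (fun a => by simp only [f]; ring), two_nsmul, two_mul]
  have hmixed : ∑ a, ∑ b, (s b * D a + s a * D b) = 2 * S * ∑ a, D a := by
    simp only [sum_add_distrib, ← sum_mul, ← mul_sum, S]
    ring
  have hwithin : ∑ a, (s a / 2) * (1 / (s a * s a) * E a a) = (∑ a, D a) / 2 := by
    rw [sum_div]
    refine sum_congr rfl fun a _ => ?_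
    simp only [D]
    field_simp [hs0 a]
  have htotal : ∑ a, ∑ b, f a b = (∑ a, ∑ b, E a b) / S - ∑ a, D a := by
    simp only [hf, sum_sub_distrib, ← sum_div, hmixed]
    field_simp
  change ∑ a, ∑ b ∈ Ioi a, f a b + _ = _
  rw [hwithin, show ∑ a, ∑ b ∈ Ioi a, f a b = ((∑ a, ∑ b, E a b) / S - ∑ a, D a) / 2 by
    linear_combination (hpairs + htotal) / 2]
  field_simp
  ring

/-- For any disjoint partition into `k` clusters, `S + W = (s/2)·g(X,X)`, where
`g(X,X) = (1/s²) Σ_i Σ_j w_i w_j ρ(x_i,x_j)` and `s = Σ_i w_i`; in particular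
`S + W` does not depend on the choice of partition. -/
theorem stmt0 {X : Type*} {n k : ℕ} (x : Fin n → X) (w : Fin n → ℝ)
    (hw : ∀ i, 0 < w i) (ρ : X → X → ℝ) (hsym : ∀ a b, ρ a b = ρ b a)
    (C : Fin k → Finset (Fin n)) (hpart : EnergyPartition C) :
    energyS x w ρ C + energyW x w ρ C =
      ((∑ i : Fin n, w i) / 2) *
        ((1 / (∑ i : Fin n, w i) ^ 2) *
          ∑ i : Fin n, ∑ j : Fin n, w i * w j * ρ (x i) (x j)) := by
  obtain ⟨hdisj, hcover, hne⟩ := hpart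
  have hsplit := sum_eq_sum_sum_of_partition (M := ℝ) (fun a b hab => hdisj a b hab) hcover
  set E := fun a b => ∑ i ∈ C a, ∑ j ∈ C b, w i * w j * ρ (x i) (x j)
  have hE : ∀ a b, E a b = E b a := fun a b => by
    simp only [E]
    rw [sum_comm]
    exact sum_congr rfl fun j _ => sum_congr rfl fun i _ => by rw [hsym]; ring
  have htotal : ∑ i, ∑ j, w i * w j * ρ (x i) (x j) = ∑ a, ∑ b, E a b := by
    calc ∑ i, ∑ j, w i * w j * ρ (x i) (x j)
        = ∑ a, ∑ i ∈ C a, ∑ b, ∑ j ∈ C b, w i * w j * ρ (x i) (x j) := by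
          rw [hsplit]
          exact sum_congr rfl fun a _ => sum_congr rfl fun i _ => hsplit _
      _ = ∑ a, ∑ b, E a b := sum_congr rfl fun a _ => sum_comm
  rw [hsplit w, htotal]
  exact between_add_within_eq (fun a => ∑ i ∈ C a, w i) E
    (fun a => sum_pos (fun i _ => hw i) (hne a)) hE
end

section
/- For a fixed number of clusters k, a disjoint partition C_1^⋆,…,C_k^⋆ of the data maximizes the between-sample energy statistic S over all partitions into k clusters if and only if it minimizes the within energy dispersion W over all partitions into k clusters. -/
open Finset

/-!
`S + W` does not depend on the partition. Write `g_ab = g(C_a, C_b)`. Symmetry of `g` turns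
`S` into the full double sum `Σ_{a,b} (s_a s_b / 2s)(g_ab - g_aa)`, and since `Σ_b s_b = s`
this is `Σ_{a,b} s_a s_b g_ab / 2s - W`. As `s_a s_b g_ab` is the total weighted interaction
between `C_a` and `C_b`, the double sum is `Σ_{i,j} w_i w_j ρ(x_i, x_j) / 2s`, independent of
the partition. Hence `S = const - W`.
-/

theorem sum_sum_Ioi_mul_sub_add_sum {ι : Type*} [Fintype ι] [LinearOrder ι]
    [LocallyFiniteOrderTop ι] [LocallyFiniteOrderBot ι] (σ : ι → ℝ) (g : ι → ι → ℝ)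
    (hg : ∀ a b, g a b = g b a) (hs : ∑ c, σ c ≠ 0) :
    ∑ a, ∑ b ∈ Ioi a, σ a * σ b / (2 * ∑ c, σ c) * (2 * g a b - g a a - g b b) +
        ∑ a, σ a / 2 * g a a =
      (∑ a, ∑ b, σ a * σ b * g a b) / (2 * ∑ c, σ c) := by
  set s := ∑ c, σ c
  set F : ι → ι → ℝ := fun a b => σ a * σ b / (2 * s) * (g a b - g a a)
  have hpairs : ∑ a, ∑ b ∈ Ioi a, σ a * σ b / (2 * s) * (2 * g a b - g a a - g b b) =
      ∑ a, ∑ b, F a b := by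
    calc _ = ∑ a, ∑ b ∈ Ioi a, (F a b + F b a) := by
          refine sum_congr rfl fun a _ => sum_congr rfl fun b _ => ?_
          simp only [F, hg b a]
          ring
      _ = ∑ a, ∑ b ∈ {a}ᶜ, F a b :=
          sum_sum_Ioi_add_eq_sum_sum_off_diag fun b a => F a b
      _ = ∑ a, ∑ b, F a b := by
          refine sum_congr rfl fun a _ => ?_
          rw [← sum_compl_add_sum {a}, sum_singleton]
          simp [F]
  have hrow : ∀ a, ∑ b, F a b = (∑ b, σ a * σ b * g a b) / (2 * s) - σ a / 2 * g a a := by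
    intro a
    have hdiag : ∑ b, σ a * σ b / (2 * s) * g a a = σ a / 2 * g a a := by
      rw [← sum_mul, ← sum_div, ← mul_sum, mul_div_mul_right _ _ hs]
    simp only [F, mul_sub, sum_sub_distrib, hdiag]
    simp only [div_mul_eq_mul_div, sum_div]
  rw [hpairs, sum_congr rfl fun a _ => hrow a, sum_sub_distrib, sum_div]
  ring

theorem EnergyPartition.sum_sum_eq_sum {n k : ℕ} {C : Fin k → Finset (Fin n)}
    (hC : EnergyPartition C) {M : Type*} [AddCommMonoid M] (f : Fin n → M) :
    ∑ a, ∑ i ∈ C a, f i = ∑ i, f i := by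
  rw [← sum_biUnion fun a _ b _ hab => hC.1 a b hab]
  congr 1
  refine eq_univ_of_forall fun i => ?_
  obtain ⟨a, ha⟩ := hC.2.1 i
  exact mem_biUnion.mpr ⟨a, mem_univ a, ha⟩

theorem EnergyPartition.sum_sum_sum_sum_eq_sum_sum {n k : ℕ} {C : Fin k → Finset (Fin n)}
    (hC : EnergyPartition C) {M : Type*} [AddCommMonoid M] (f : Fin n → Fin n → M) :
    ∑ a, ∑ b, ∑ i ∈ C a, ∑ j ∈ C b, f i j = ∑ i, ∑ j, f i j := by
  simp_rw [sum_comm (s := univ) (t := C _), hC.sum_sum_eq_sum]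

section Energy

variable {X : Type*} {n : ℕ} (x : Fin n → X) (w : Fin n → ℝ) (ρ : X → X → ℝ)

theorem energyG_comm (hsym : ∀ a b, ρ a b = ρ b a) (A B : Finset (Fin n)) :
    energyG x w ρ A B = energyG x w ρ B A := by
  unfold energyG
  rw [sum_comm, mul_comm (∑ i ∈ A, w i)]
  congr 1
  refine sum_congr rfl fun j _ => sum_congr rfl fun i _ => ?_
  rw [hsym]
  ring

theorem mul_energyG {A B : Finset (Fin n)} (hA : ∑ i ∈ A, w i ≠ 0) (hB : ∑ j ∈ B, w j ≠ 0) :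
    (∑ i ∈ A, w i) * (∑ j ∈ B, w j) * energyG x w ρ A B =
      ∑ i ∈ A, ∑ j ∈ B, w i * w j * ρ (x i) (x j) := by
  unfold energyG
  field_simp

theorem energyS_add_energyW {k : ℕ} (hw : ∀ i, 0 < w i) (hsym : ∀ a b, ρ a b = ρ b a)
    {C : Fin k → Finset (Fin n)} (hC : EnergyPartition C) :
    energyS x w ρ C + energyW x w ρ C =
      (∑ i, ∑ j, w i * w j * ρ (x i) (x j)) / (2 * ∑ i, w i) := by
  rcases isEmpty_or_nonempty (Fin k) with hk | hk
  · have hw0 : ∑ i, w i = 0 := by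
      rw [← hC.sum_sum_eq_sum]
      simp
    simp [energyS, energyW, hw0]
  have hσ : ∀ a, 0 < ∑ i ∈ C a, w i := fun a => sum_pos (fun i _ => hw i) (hC.2.2 a)
  rw [energyS, energyW, sum_sum_Ioi_mul_sub_add_sum _ _
      (fun a b => energyG_comm x w ρ hsym (C a) (C b))
      (sum_pos (fun a _ => hσ a) univ_nonempty).ne',
    hC.sum_sum_eq_sum, ← hC.sum_sum_sum_sum_eq_sum_sum]
  congr 1
  exact sum_congr rfl fun a _ => sum_congr rfl fun b _ =>
    mul_energyG x w ρ (hσ a).ne' (hσ b).ne'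

end Energy

/-- For a fixed number of clusters `k`, a partition `C⋆` maximizes the between-sample
energy statistic `S` over all partitions into `k` clusters if and only if it minimizes
the within energy dispersion `W` over all partitions into `k` clusters. -/
theorem stmt1 {X : Type*} {n k : ℕ} (x : Fin n → X) (w : Fin n → ℝ)
    (hw : ∀ i, 0 < w i) (ρ : X → X → ℝ) (hsym : ∀ a b, ρ a b = ρ b a)
    (Cstar : Fin k → Finset (Fin n)) (hstar : EnergyPartition Cstar) :
    (∀ C : Fin k → Finset (Fin n), EnergyPartition C →
        energyS x w ρ C ≤ energyS x w ρ Cstar) ↔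
      (∀ C : Fin k → Finset (Fin n), EnergyPartition C →
        energyW x w ρ Cstar ≤ energyW x w ρ C) := by
  have hS : ∀ C : Fin k → Finset (Fin n), EnergyPartition C →
      energyS x w ρ C = (∑ i, ∑ j, w i * w j * ρ (x i) (x j)) / (2 * ∑ i, w i) -
        energyW x w ρ C :=
    fun C hC => eq_sub_of_add_eq (energyS_add_energyW x w ρ hw hsym hC)
  refine forall₂_congr fun C hC => ?_
  rw [hS C hC, hS Cstar hstar, sub_le_sub_iff_left]
end

section
/- If the kernel k generates the semimetric ρ, i.e. ρ(x,y) = κ(x,x) + κ(y,y) − 2κ(x,y), then the within energy dispersion satisfies W = Σ_{a=1}^k Σ_{i∈C_a} w_i κ(x_i,x_i) − Σ_{a=1}^k (1/s_a) Σ_{i∈C_a} Σ_{j∈C_a} w_i w_j κ(x_i,x_j). Consequently, since the first term does not depend on the partition, minimizing W over partitions into k clusters is equivalent to maximizing Σ_{a=1}^k (1/s_a) Σ_{i,j∈C_a} w_i w_j κ(x_i,x_j). -/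
open Finset

/-- The kernel clustering objective `Q = Σ_a (1/s_a) Σ_{i,j∈C_a} w_i w_j κ(x_i,x_j)`. -/
noncomputable def energyQ {X : Type*} {n k : ℕ} (x : Fin n → X) (w : Fin n → ℝ)
    (κ : X → X → ℝ) (C : Fin k → Finset (Fin n)) : ℝ :=
  ∑ a, (1 / ∑ i ∈ C a, w i) * ∑ i ∈ C a, ∑ j ∈ C a, w i * w j * κ (x i) (x j)

/-! Substituting `ρ(x,y) = κ(x,x) + κ(y,y) − 2κ(x,y)`, each of the two diagonal parts of the double
sum over a cluster `C_a` equals `s_a Σ_{i∈C_a} w_i κ(x_i,x_i)`, which the prefactor `1/(2 s_a)` of `W`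
reduces to `Σ_{i∈C_a} w_i κ(x_i,x_i)`. Over a partition these terms add up to `Σ_i w_i κ(x_i,x_i)`,
so `W` is a partition-independent constant minus the kernel objective. -/

theorem sum_sum_mul_mul_add_sub_two_mul {ι : Type*} (s : Finset ι) (w d : ι → ℝ)
    (K : ι → ι → ℝ) :
    ∑ i ∈ s, ∑ j ∈ s, w i * w j * (d i + d j - 2 * K i j) =
      2 * (∑ i ∈ s, w i) * (∑ i ∈ s, w i * d i) - 2 * ∑ i ∈ s, ∑ j ∈ s, w i * w j * K i j := by
  have hdiag : ∑ i ∈ s, ∑ j ∈ s, w i * w j * d i = (∑ i ∈ s, w i) * ∑ i ∈ s, w i * d i := by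
    rw [Finset.sum_comm, Finset.sum_mul_sum]
    exact Finset.sum_congr rfl fun _ _ => Finset.sum_congr rfl fun _ _ => by ring
  have hdiag' : ∑ i ∈ s, ∑ j ∈ s, w i * w j * d j = (∑ i ∈ s, w i) * ∑ i ∈ s, w i * d i := by
    rw [Finset.sum_mul_sum]
    exact Finset.sum_congr rfl fun _ _ => Finset.sum_congr rfl fun _ _ => by ring
  simp only [mul_sub, mul_add, Finset.sum_sub_distrib, Finset.sum_add_distrib, hdiag, hdiag',
    mul_left_comm _ (2 : ℝ), ← Finset.mul_sum]
  ring

theorem half_mul_energyG_self {X : Type*} {n : ℕ} (x : Fin n → X) (w : Fin n → ℝ)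
    {ρ κ : X → X → ℝ} (hgen : ∀ a b, ρ a b = κ a a + κ b b - 2 * κ a b)
    {A : Finset (Fin n)} (hA : ∑ i ∈ A, w i ≠ 0) :
    (∑ i ∈ A, w i) / 2 * energyG x w ρ A A =
      ∑ i ∈ A, w i * κ (x i) (x i) -
        1 / (∑ i ∈ A, w i) * ∑ i ∈ A, ∑ j ∈ A, w i * w j * κ (x i) (x j) := by
  simp only [energyG, hgen, sum_sum_mul_mul_add_sub_two_mul A w (fun i => κ (x i) (x i))
    (fun i j => κ (x i) (x j))]
  field_simp

theorem energyW_eq_sum_sub_energyQ {X : Type*} {n k : ℕ} (x : Fin n → X) (w : Fin n → ℝ)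
    {ρ κ : X → X → ℝ} (hgen : ∀ a b, ρ a b = κ a a + κ b b - 2 * κ a b)
    {C : Fin k → Finset (Fin n)} (hC : ∀ a, ∑ i ∈ C a, w i ≠ 0) :
    energyW x w ρ C = (∑ a, ∑ i ∈ C a, w i * κ (x i) (x i)) - energyQ x w κ C := by
  simp only [energyW, energyQ, ← Finset.sum_sub_distrib, half_mul_energyG_self x w hgen (hC _)]

namespace EnergyPartition

variable {n k : ℕ} {C : Fin k → Finset (Fin n)}

theorem sum_weight_pos (hC : EnergyPartition C) {w : Fin n → ℝ} (hw : ∀ i, 0 < w i)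
    (a : Fin k) : 0 < ∑ i ∈ C a, w i :=
  Finset.sum_pos (fun i _ => hw i) (hC.2.2 a)

theorem sum_sum_eq {M : Type*} [AddCommMonoid M] (hC : EnergyPartition C) (f : Fin n → M) :
    ∑ a, ∑ i ∈ C a, f i = ∑ i, f i := by
  rw [← Finset.sum_biUnion fun a _ b _ hab => hC.1 a b hab]
  congr 1
  refine Finset.eq_univ_iff_forall.mpr fun i => ?_
  obtain ⟨a, ha⟩ := hC.2.1 i
  exact Finset.mem_biUnion.mpr ⟨a, Finset.mem_univ a, ha⟩

end EnergyPartition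

theorem stmt2_general {X : Type*} {n k : ℕ} (x : Fin n → X) (w : Fin n → ℝ)
    (hw : ∀ i, 0 < w i) (ρ : X → X → ℝ) (κ : X → X → ℝ)
    (hgen : ∀ a b, ρ a b = κ a a + κ b b - 2 * κ a b)
    (Cstar : Fin k → Finset (Fin n)) (hstar : EnergyPartition Cstar) :
    (∀ C : Fin k → Finset (Fin n), EnergyPartition C →
        energyW x w ρ C =
          (∑ a : Fin k, ∑ i ∈ C a, w i * κ (x i) (x i)) - energyQ x w κ C) ∧
      ((∀ C : Fin k → Finset (Fin n), EnergyPartition C →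
          energyW x w ρ Cstar ≤ energyW x w ρ C) ↔
        (∀ C : Fin k → Finset (Fin n), EnergyPartition C →
          energyQ x w κ C ≤ energyQ x w κ Cstar)) := by
  have hW : ∀ C : Fin k → Finset (Fin n), EnergyPartition C →
      energyW x w ρ C = (∑ i, w i * κ (x i) (x i)) - energyQ x w κ C := fun C hC => by
    rw [energyW_eq_sum_sub_energyQ x w hgen fun a => (hC.sum_weight_pos hw a).ne',
      hC.sum_sum_eq]
  refine ⟨fun C hC => by rw [hC.sum_sum_eq, hW C hC], ?_⟩
  refine forall₂_congr fun C hC => ?_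
  rw [hW C hC, hW Cstar hstar, sub_le_sub_iff_left]

/-- If `κ` generates the semimetric `ρ`, i.e. `ρ(x,y) = κ(x,x) + κ(y,y) − 2κ(x,y)`,
then `W = Σ_a Σ_{i∈C_a} w_i κ(x_i,x_i) − Σ_a (1/s_a) Σ_{i,j∈C_a} w_i w_j κ(x_i,x_j)`;
consequently, minimizing `W` over partitions into `k` clusters is equivalent to
maximizing `Σ_a (1/s_a) Σ_{i,j∈C_a} w_i w_j κ(x_i,x_j)`. -/
theorem stmt2 {X : Type*} {n k : ℕ} (x : Fin n → X) (w : Fin n → ℝ)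
    (hw : ∀ i, 0 < w i) (ρ : X → X → ℝ) (κ : X → X → ℝ)
    (hκsym : ∀ a b, κ a b = κ b a)
    (hgen : ∀ a b, ρ a b = κ a a + κ b b - 2 * κ a b)
    (Cstar : Fin k → Finset (Fin n)) (hstar : EnergyPartition Cstar) :
    (∀ C : Fin k → Finset (Fin n), EnergyPartition C →
        energyW x w ρ C =
          (∑ a : Fin k, ∑ i ∈ C a, w i * κ (x i) (x i)) - energyQ x w κ C) ∧
      ((∀ C : Fin k → Finset (Fin n), EnergyPartition C →
          energyW x w ρ Cstar ≤ energyW x w ρ C) ↔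
        (∀ C : Fin k → Finset (Fin n), EnergyPartition C →
          energyQ x w κ C ≤ energyQ x w κ Cstar)) :=
  stmt2_general x w hw ρ κ hgen Cstar hstar
end

section
/- Let ρ : X × X → ℝ be a symmetric semimetric of negative type with ρ(x,x) = 0 for all x, and fix a base point x_0 ∈ X. Define κ(x,y) = (1/2)[ρ(x,x_0) + ρ(y,x_0) − ρ(x,y)]. Then κ is a positive-definite kernel: for all points x_1,…,x_n ∈ X and all real numbers c_1,…,c_n (with no constraint on their sum), Σ_{i,j=1}^n c_i c_j κ(x_i,x_j) ≥ 0. -/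
/-!
Centre the coefficients by adding the base point `x₀` with weight `-∑ cᵢ`. Negative type applied
to this balanced family says exactly that `∑ cᵢ cⱼ ρ(xᵢ,xⱼ) ≤ 2 (∑ cᵢ)(∑ cᵢ ρ(xᵢ,x₀))`, and the
right-hand side minus the left-hand side is twice the quadratic form of `κ`.
-/

open Finset

def IsNegativeType {X : Type*} (ρ : X → X → ℝ) : Prop :=
  ∀ (m : ℕ) (y : Fin m → X) (c : Fin m → ℝ), ∑ i, c i = 0 →
    ∑ i, ∑ j, c i * c j * ρ (y i) (y j) ≤ 0

lemma Fin.sum_sum_snoc_mul_mul {X : Type*} (K : X → X → ℝ) {n : ℕ} (x : Fin n → X) (x₀ : X)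
    (c : Fin n → ℝ) (d : ℝ) :
    ∑ i : Fin (n + 1), ∑ j : Fin (n + 1),
        Fin.snoc (α := fun _ => ℝ) c d i * Fin.snoc (α := fun _ => ℝ) c d j *
        K (Fin.snoc (α := fun _ => X) x x₀ i) (Fin.snoc (α := fun _ => X) x x₀ j)
      = ∑ i, ∑ j, c i * c j * K (x i) (x j)
        + d * ∑ i, c i * K (x i) x₀ + d * ∑ j, c j * K x₀ (x j) + d ^ 2 * K x₀ x₀ := by
  simp only [Fin.sum_univ_castSucc, Fin.snoc_castSucc, Fin.snoc_last, sum_add_distrib, mul_sum]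
  ring_nf

lemma sum_sum_mul_half_sub {ι : Type*} [Fintype ι] (K : ι → ι → ℝ) (f c : ι → ℝ) :
    ∑ i, ∑ j, c i * c j * ((1 / 2) * (f i + f j - K i j))
      = (∑ i, c i) * ∑ i, c i * f i - (1 / 2) * ∑ i, ∑ j, c i * c j * K i j := by
  have hsplit : ∀ i j, c i * c j * ((1 / 2) * (f i + f j - K i j))
      = (1 / 2) * (c j * (c i * f i)) + (1 / 2) * (c i * (c j * f j))
        - (1 / 2) * (c i * c j * K i j) := fun i j => by ring
  simp only [hsplit, sum_add_distrib, sum_sub_distrib, ← mul_sum, ← sum_mul]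
  ring

lemma IsNegativeType.sum_sum_mul_le {X : Type*} {ρ : X → X → ℝ} (hρ : IsNegativeType ρ)
    (hsym : ∀ a b, ρ a b = ρ b a) (x₀ : X) (hx₀ : ρ x₀ x₀ = 0) {n : ℕ} (x : Fin n → X)
    (c : Fin n → ℝ) :
    ∑ i, ∑ j, c i * c j * ρ (x i) (x j) ≤ 2 * (∑ i, c i) * ∑ i, c i * ρ (x i) x₀ := by
  have hbalanced : ∑ i, Fin.snoc (α := fun _ => ℝ) c (-∑ i, c i) i = 0 := by
    simp [Fin.sum_univ_castSucc]
  have h := hρ (n + 1) (Fin.snoc x x₀) _ hbalanced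
  rw [Fin.sum_sum_snoc_mul_mul, hx₀] at h
  simp only [hsym x₀] at h
  linarith

/-- Let `ρ` be a symmetric semimetric of negative type with `ρ(x,x) = 0`, and fix a
base point `x₀`. Define `κ(x,y) = (1/2)[ρ(x,x₀) + ρ(y,x₀) − ρ(x,y)]`. Then `κ` is a
positive-definite kernel: `Σ_{i,j} c_i c_j κ(x_i,x_j) ≥ 0` for all points
`x_1,…,x_n` and all real coefficients `c_1,…,c_n`. -/
theorem stmt8 {X : Type*} (ρ : X → X → ℝ) (hsym : ∀ a b, ρ a b = ρ b a)
    (hzero : ∀ a, ρ a a = 0)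
    (hneg : ∀ (m : ℕ) (y : Fin m → X) (c : Fin m → ℝ), (∑ i, c i = 0) →
      ∑ i : Fin m, ∑ j : Fin m, c i * c j * ρ (y i) (y j) ≤ 0)
    (x₀ : X) {n : ℕ} (x : Fin n → X) (c : Fin n → ℝ) :
    0 ≤ ∑ i : Fin n, ∑ j : Fin n,
        c i * c j * ((1 / 2) * (ρ (x i) x₀ + ρ (x j) x₀ - ρ (x i) (x j))) := by
  have hρ : IsNegativeType ρ := hneg
  rw [sum_sum_mul_half_sub (fun i j => ρ (x i) (x j)) (fun i => ρ (x i) x₀)]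
  linarith [hρ.sum_sum_mul_le hsym x₀ (hzero x₀) x c]
end

section
/- Define the total clustering objective Q = Σ_{a=1}^k Q_a/s_a, where Q_a = Σ_{i∈C_a} Σ_{j∈C_a} w_i w_j κ(x_i,x_j), and for a data point x_i let Q_a(x_i) = Σ_{j∈C_a} w_i w_j κ(x_i,x_j). Suppose x_i currently belongs to cluster C_b with s_b > w_i, and let Q′ be the objective of the partition obtained by moving x_i from C_b to a different cluster C_ℓ. Then the change ΔQ = Q′ − Q equals (1/(s_b − w_i))[(w_i/s_b) Q_b − 2 Q_b(x_i) + w_i² κ(x_i,x_i)] − (1/(s_ℓ + w_i))[(w_i/s_ℓ) Q_ℓ − 2 Q_ℓ(x_i) − w_i² κ(x_i,x_i)]. In particular, if this expression is positive, reassigning x_i to C_ℓ strictly increases Q. -/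
open Finset

/-- The internal cost of a cluster `A`: `Q_A = Σ_{p,q∈A} w_p w_q κ(x_p,x_q)`. -/
noncomputable def energyQcl {X : Type*} {n : ℕ} (x : Fin n → X) (w : Fin n → ℝ)
    (κ : X → X → ℝ) (A : Finset (Fin n)) : ℝ :=
  ∑ p ∈ A, ∑ q ∈ A, w p * w q * κ (x p) (x q)

/-- The cost of point `x_i` with cluster `A`: `Q_A(x_i) = Σ_{j∈A} w_i w_j κ(x_i,x_j)`. -/
noncomputable def energyQpt {X : Type*} {n : ℕ} (x : Fin n → X) (w : Fin n → ℝ)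
    (κ : X → X → ℝ) (A : Finset (Fin n)) (i : Fin n) : ℝ :=
  ∑ j ∈ A, w i * w j * κ (x i) (x j)

/-- The total clustering objective `Q = Σ_a Q_a / s_a`. -/
noncomputable def energyQtot {X : Type*} {n k : ℕ} (x : Fin n → X) (w : Fin n → ℝ)
    (κ : X → X → ℝ) (C : Fin k → Finset (Fin n)) : ℝ :=
  ∑ a, energyQcl x w κ (C a) / (∑ p ∈ C a, w p)

/-!
Only the clusters `C_b` and `C_ℓ` change. By symmetry of `κ`, adding a point `i ∉ A` raises the
internal cost by `2 Q_A(x_i) + w_i² κ(x_i,x_i)`, and removing `i ∈ A` lowers it by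
`2 Q_A(x_i) − w_i² κ(x_i,x_i)` (the diagonal term is counted in `Q_A(x_i)`). The stated formula is
what remains of `Q'_a / s'_a − Q_a / s_a` for `a = b, ℓ` over a common denominator.
-/

section ClusterCost

variable {X : Type*} {n : ℕ} (x : Fin n → X) (w : Fin n → ℝ) (κ : X → X → ℝ)

lemma energyQcl_insert (hκ : ∀ a b, κ a b = κ b a) {A : Finset (Fin n)} {i : Fin n}
    (hi : i ∉ A) :
    energyQcl x w κ (insert i A) =
      energyQcl x w κ A + 2 * energyQpt x w κ A i + w i ^ 2 * κ (x i) (x i) := by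
  have hcross : ∑ p ∈ A, w p * w i * κ (x p) (x i) = energyQpt x w κ A i :=
    sum_congr rfl fun p _ => by rw [hκ]; ring
  unfold energyQcl
  simp only [sum_insert hi, sum_add_distrib, hcross]
  unfold energyQpt
  ring

lemma energyQpt_eq_erase_add {A : Finset (Fin n)} {i : Fin n} (hi : i ∈ A) :
    energyQpt x w κ A i = energyQpt x w κ (A.erase i) i + w i ^ 2 * κ (x i) (x i) := by
  rw [energyQpt, ← add_sum_erase _ _ hi, add_comm, energyQpt, sq]

lemma energyQcl_erase (hκ : ∀ a b, κ a b = κ b a) {A : Finset (Fin n)} {i : Fin n}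
    (hi : i ∈ A) :
    energyQcl x w κ (A.erase i) =
      energyQcl x w κ A - 2 * energyQpt x w κ A i + w i ^ 2 * κ (x i) (x i) := by
  have h := energyQcl_insert x w κ hκ (notMem_erase i A)
  rw [insert_erase hi] at h
  rw [h, energyQpt_eq_erase_add x w κ hi]
  ring

lemma energyQcl_erase_div_sub_div (hκ : ∀ a b, κ a b = κ b a) {A : Finset (Fin n)}
    {i : Fin n} (hi : i ∈ A) (hs : ∑ p ∈ A, w p ≠ 0) (hs' : ∑ p ∈ A, w p - w i ≠ 0) :
    energyQcl x w κ (A.erase i) / (∑ p ∈ A.erase i, w p) - energyQcl x w κ A / (∑ p ∈ A, w p) =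
      1 / (∑ p ∈ A, w p - w i) *
        ((w i / ∑ p ∈ A, w p) * energyQcl x w κ A - 2 * energyQpt x w κ A i +
          w i ^ 2 * κ (x i) (x i)) := by
  rw [energyQcl_erase x w κ hκ hi, sum_erase_eq_sub hi]
  field_simp
  ring

lemma energyQcl_insert_div_sub_div (hκ : ∀ a b, κ a b = κ b a) {A : Finset (Fin n)}
    {i : Fin n} (hi : i ∉ A) (hs : ∑ p ∈ A, w p ≠ 0) (hs' : ∑ p ∈ A, w p + w i ≠ 0) :
    energyQcl x w κ (insert i A) / (∑ p ∈ insert i A, w p) - energyQcl x w κ A / (∑ p ∈ A, w p) =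
      -(1 / (∑ p ∈ A, w p + w i) *
        ((w i / ∑ p ∈ A, w p) * energyQcl x w κ A - 2 * energyQpt x w κ A i -
          w i ^ 2 * κ (x i) (x i))) := by
  rw [energyQcl_insert x w κ hκ hi, sum_insert hi, add_comm (w i)]
  field_simp
  ring

lemma energyQtot_sub_eq_add {k : ℕ} {C C' : Fin k → Finset (Fin n)} {b ℓ : Fin k}
    (hbℓ : b ≠ ℓ) (hC : ∀ a, a ≠ b → a ≠ ℓ → C' a = C a) :
    energyQtot x w κ C' - energyQtot x w κ C =
      (energyQcl x w κ (C' b) / (∑ p ∈ C' b, w p) - energyQcl x w κ (C b) / (∑ p ∈ C b, w p)) +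
        (energyQcl x w κ (C' ℓ) / (∑ p ∈ C' ℓ, w p) -
          energyQcl x w κ (C ℓ) / (∑ p ∈ C ℓ, w p)) := by
  rw [energyQtot, energyQtot, ← sum_sub_distrib]
  refine sum_eq_add b ℓ hbℓ (fun a _ ha => ?_) (by simp) (by simp)
  rw [hC a ha.1 ha.2, sub_self]

end ClusterCost

/-- Moving `x_i` from its cluster `C_b` (with `s_b > w_i`) to another cluster `C_ℓ`
changes the total objective `Q` by
`ΔQ = (1/(s_b−w_i))[(w_i/s_b)Q_b − 2Q_b(x_i) + w_i²κ(x_i,x_i)]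
    − (1/(s_ℓ+w_i))[(w_i/s_ℓ)Q_ℓ − 2Q_ℓ(x_i) − w_i²κ(x_i,x_i)]`;
in particular if this is positive, the reassignment strictly increases `Q`. -/
theorem stmt14 {X : Type*} {n k : ℕ} (x : Fin n → X) (w : Fin n → ℝ)
    (hw : ∀ i, 0 < w i) (κ : X → X → ℝ) (hκsym : ∀ a b, κ a b = κ b a)
    (C : Fin k → Finset (Fin n)) (hpart : EnergyPartition C)
    (i : Fin n) (b ℓ : Fin k) (hib : i ∈ C b) (hlb : ℓ ≠ b)
    (hsb : w i < ∑ p ∈ C b, w p) :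
    let C' : Fin k → Finset (Fin n) := fun a =>
      if a = b then (C b).erase i else if a = ℓ then insert i (C ℓ) else C a
    let Δ : ℝ :=
      (1 / ((∑ p ∈ C b, w p) - w i)) *
          ((w i / ∑ p ∈ C b, w p) * energyQcl x w κ (C b) -
            2 * energyQpt x w κ (C b) i + (w i) ^ 2 * κ (x i) (x i)) -
        (1 / ((∑ p ∈ C ℓ, w p) + w i)) *
          ((w i / ∑ p ∈ C ℓ, w p) * energyQcl x w κ (C ℓ) -
            2 * energyQpt x w κ (C ℓ) i - (w i) ^ 2 * κ (x i) (x i))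
    energyQtot x w κ C' - energyQtot x w κ C = Δ ∧
      (0 < Δ → energyQtot x w κ C < energyQtot x w κ C') := by
  intro C' Δ
  obtain ⟨hdisj, -, hne⟩ := hpart
  have hiℓ : i ∉ C ℓ := fun h => disjoint_left.mp (hdisj ℓ b hlb) h hib
  have hsℓ : 0 < ∑ p ∈ C ℓ, w p := sum_pos (fun p _ => hw p) (hne ℓ)
  have hΔ : energyQtot x w κ C' - energyQtot x w κ C = Δ := by
    rw [energyQtot_sub_eq_add x w κ hlb.symm (fun a hab haℓ => by simp [C', hab, haℓ])]
    simp only [C', if_pos rfl, if_neg hlb, if_true]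
    rw [energyQcl_erase_div_sub_div x w κ hκsym hib (by linarith [hw i]) (by linarith),
      energyQcl_insert_div_sub_div x w κ hκsym hiℓ hsℓ.ne' (by linarith [hw i])]
    simp only [Δ]
    ring
  exact ⟨hΔ, fun hpos => sub_pos.mp (hΔ ▸ hpos)⟩
end
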